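/- arXiv:2307.05978 — 2 statements merged into one kernel-verified Lean document; each statement's English description precedes it below -/
import Mathlib

section
/- Let A, B ∈ ℝ^(N×N) with A invertible, M = A⁻¹B, u a right eigenvector of M with eigenvalue k, ũ* a left eigenvector (Mᵀ ũ* = k ũ*), ⟨u, ũ*⟩ ≠ 0, and P the associated spectral complement projector. For any uN ∈ ℝ^N and kN ∉ σ((PMP)|_{(Span{ũ*})^⊥}), with residual R_N = (B − kN A) uN, one has the identity P uN = P (PMP − kN I)⁺ P A⁻¹ R_N and consequently inf_{v ∈ Span{u}} ‖uN − v‖ ≤ ‖P (PMP − kN I)⁺ P A⁻¹‖ · ‖R_N‖. -/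
/-!
Because `ũ*` is a left and `u` a right eigenvector for the same eigenvalue, `P` commutes with
`M`, hence `P (M - kN I) = (PMP - kN I) P`. Since `A⁻¹ R_N = (M - kN I) uN`, applying `P` gives
`(PMP - kN I) (P uN)`, and `P uN` lies in `(Span {ũ*})^⊥`, where the pseudo-inverse undoes
`PMP - kN I`. The bound follows because `P uN = uN - c u` with `c = ⟨ũ*, uN⟩ / ⟨u, ũ*⟩`.
-/

open Matrix

/-- Operator norm of a matrix, induced by the Euclidean vector norm. -/
noncomputable def opNorm {n : ℕ} (A : Matrix (Fin n) (Fin n) ℝ) : ℝ :=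
  ‖(Matrix.toEuclideanCLM (𝕜 := ℝ) A : EuclideanSpace ℝ (Fin n) →L[ℝ] EuclideanSpace ℝ (Fin n))‖

namespace Matrix

variable {m K : Type*} [Fintype m] [DecidableEq m] [Field K]

/-- When `u ⬝ᵥ ut ≠ 0`, the projector onto `(Span {ut})^⊥` along `Span {u}`. -/
def spectralComplement (u ut : m → K) : Matrix m m K :=
  1 - (u ⬝ᵥ ut)⁻¹ • vecMulVec u ut

variable {u ut : m → K}

theorem spectralComplement_mulVec (x : m → K) :
    spectralComplement u ut *ᵥ x = x - ((u ⬝ᵥ ut)⁻¹ * (ut ⬝ᵥ x)) • u := by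
  rw [spectralComplement, sub_mulVec, one_mulVec, smul_mulVec, vecMulVec_mulVec, op_smul_eq_smul,
    smul_smul]

theorem vecMul_spectralComplement (hpair : u ⬝ᵥ ut ≠ 0) : ut ᵥ* spectralComplement u ut = 0 := by
  rw [spectralComplement, vecMul_sub, vecMul_one, vecMul_smul, vecMul_vecMulVec,
    dotProduct_comm ut u, smul_smul, inv_mul_cancel₀ hpair, one_smul, sub_self]

theorem dotProduct_spectralComplement_mulVec (hpair : u ⬝ᵥ ut ≠ 0) (x : m → K) :
    ut ⬝ᵥ spectralComplement u ut *ᵥ x = 0 := by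
  rw [dotProduct_mulVec, vecMul_spectralComplement hpair, zero_dotProduct]

theorem spectralComplement_mulVec_of_dotProduct_eq_zero {x : m → K} (hx : ut ⬝ᵥ x = 0) :
    spectralComplement u ut *ᵥ x = x := by
  rw [spectralComplement_mulVec, hx, mul_zero, zero_smul, sub_zero]

theorem spectralComplement_mul_self (hpair : u ⬝ᵥ ut ≠ 0) :
    spectralComplement u ut * spectralComplement u ut = spectralComplement u ut := by
  refine ext_iff_mulVec.mpr fun x => ?_
  rw [← mulVec_mulVec, spectralComplement_mulVec_of_dotProduct_eq_zero
    (dotProduct_spectralComplement_mulVec hpair x)]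

theorem spectralComplement_mul_comm {M : Matrix m m K} {k : K} (hu : M *ᵥ u = k • u)
    (hut : ut ᵥ* M = k • ut) : spectralComplement u ut * M = M * spectralComplement u ut := by
  rw [spectralComplement, sub_mul, mul_sub, one_mul, mul_one, Matrix.smul_mul, Matrix.mul_smul,
    vecMulVec_mul, mul_vecMulVec, hu, hut, vecMulVec_smul, smul_vecMulVec]

theorem spectralComplement_mulVec_eq_mulVec_residual {A B M G : Matrix m m K} {k kN : K}
    (hA : IsUnit A) (hM : M = A⁻¹ * B) (hu : M *ᵥ u = k • u) (hut : ut ᵥ* M = k • ut)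
    (hpair : u ⬝ᵥ ut ≠ 0)
    (hG : ∀ v, ut ⬝ᵥ v = 0 →
      G *ᵥ ((spectralComplement u ut * M * spectralComplement u ut - kN • 1) *ᵥ v) = v)
    (x : m → K) :
    spectralComplement u ut *ᵥ x =
      (spectralComplement u ut * G * spectralComplement u ut * A⁻¹) *ᵥ ((B - kN • A) *ᵥ x) := by
  set P := spectralComplement u ut
  have hP : P * P = P := spectralComplement_mul_self hpair
  have hPM : P * M = M * P := spectralComplement_mul_comm hu hut
  have hresidual : A⁻¹ * (B - kN • A) = M - kN • 1 := by
    rw [Matrix.mul_sub, Matrix.mul_smul, nonsing_inv_mul A ((isUnit_iff_isUnit_det A).mp hA), hM]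
  have hdeflate : P * (M - kN • 1) = (P * M * P - kN • 1) * P := by
    rw [sub_mul, Matrix.mul_assoc (P * M), hP, hPM, Matrix.mul_assoc, hP, Matrix.mul_sub,
      Matrix.smul_mul, Matrix.mul_smul, one_mul, mul_one, hPM]
  calc P *ᵥ x = P *ᵥ (G *ᵥ ((P * M * P - kN • 1) *ᵥ (P *ᵥ x))) := by
        rw [hG _ (dotProduct_spectralComplement_mulVec hpair x), mulVec_mulVec, hP]
    _ = (P * G * (P * (A⁻¹ * (B - kN • A)))) *ᵥ x := by
        simp only [hresidual, hdeflate, mulVec_mulVec, Matrix.mul_assoc]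
    _ = (P * G * P * A⁻¹) *ᵥ ((B - kN • A) *ᵥ x) := by
        simp only [mulVec_mulVec, Matrix.mul_assoc]

end Matrix

theorem iInf_norm_sub_smul_le_norm_spectralComplement_mulVec {ι : Type*} [Fintype ι]
    [DecidableEq ι] (u ut x : EuclideanSpace ℝ ι) :
    ⨅ c : ℝ, ‖x - c • u‖ ≤ ‖WithLp.toLp 2 (spectralComplement u ut *ᵥ x)‖ := by
  rw [spectralComplement_mulVec, WithLp.toLp_sub, WithLp.toLp_smul, WithLp.toLp_ofLp,
    WithLp.toLp_ofLp]
  exact ciInf_le ⟨0, by rintro _ ⟨c, rfl⟩; positivity⟩ _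

theorem norm_toLp_mulVec_le_opNorm_mul {n : ℕ} (A : Matrix (Fin n) (Fin n) ℝ)
    (x : EuclideanSpace ℝ (Fin n)) : ‖WithLp.toLp 2 (A *ᵥ x)‖ ≤ opNorm A * ‖x‖ :=
  (toEuclideanCLM (𝕜 := ℝ) A).le_opNorm x

theorem stmt6_general (n : ℕ) (A B M G : Matrix (Fin n) (Fin n) ℝ) (hA : IsUnit A)
    (hM : M = A⁻¹ * B) (k kN : ℝ)
    (u ut uN : EuclideanSpace ℝ (Fin n))
    (heig : M *ᵥ u = k • u) (heig' : Mᵀ *ᵥ ut = k • ut)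
    (hpair : u ⬝ᵥ ut ≠ 0)
    (P : Matrix (Fin n) (Fin n) ℝ)
    (hP : P = 1 - (u ⬝ᵥ ut)⁻¹ • vecMulVec u ut)
    (hG1 : ∀ v : Fin n → ℝ, ut ⬝ᵥ v = 0 → G *ᵥ ((P * M * P - kN • 1) *ᵥ v) = v)
    (RN : EuclideanSpace ℝ (Fin n)) (hRN : RN = (B - kN • A) *ᵥ uN) :
    P *ᵥ uN = (P * G * P * A⁻¹) *ᵥ RN ∧
    (⨅ c : ℝ, ‖(uN - c • u : EuclideanSpace ℝ (Fin n))‖) ≤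
      opNorm (P * G * P * A⁻¹) * ‖RN‖ := by
  obtain rfl : P = spectralComplement u ut := hP
  have hidentity : spectralComplement u ut *ᵥ uN =
      (spectralComplement u ut * G * spectralComplement u ut * A⁻¹) *ᵥ RN := by
    rw [hRN]
    exact spectralComplement_mulVec_eq_mulVec_residual hA hM heig
      (by rwa [← mulVec_transpose]) hpair hG1 uN
  refine ⟨hidentity, ?_⟩
  calc ⨅ c : ℝ, ‖uN - c • u‖ ≤ ‖WithLp.toLp 2 (spectralComplement u ut *ᵥ uN)‖ :=
        iInf_norm_sub_smul_le_norm_spectralComplement_mulVec u ut uN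
    _ ≤ _ := by
        rw [hidentity]
        exact norm_toLp_mulVec_le_opNorm_mul _ _

/-- P uN = P (PMP − kN I)⁺ P A⁻¹ R_N and
inf_{v ∈ Span{u}} ‖uN − v‖ ≤ ‖P (PMP − kN I)⁺ P A⁻¹‖ ‖R_N‖. -/
theorem stmt6 (n : ℕ) (A B M G : Matrix (Fin n) (Fin n) ℝ) (hA : IsUnit A)
    (hM : M = A⁻¹ * B) (k kN : ℝ)
    (u ut uN : EuclideanSpace ℝ (Fin n)) (hu : u ≠ 0) (hut : ut ≠ 0)
    (heig : M *ᵥ u = k • u) (heig' : Mᵀ *ᵥ ut = k • ut)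
    (hpair : u ⬝ᵥ ut ≠ 0)
    (hsimple : ∀ v : EuclideanSpace ℝ (Fin n), M *ᵥ v = k • v → ∃ c : ℝ, v = c • u)
    (hdec : ∀ v : EuclideanSpace ℝ (Fin n), ∃ (c : ℝ) (w : EuclideanSpace ℝ (Fin n)),
      ut ⬝ᵥ w = 0 ∧ v = c • u + w)
    (P : Matrix (Fin n) (Fin n) ℝ)
    (hP : P = 1 - (u ⬝ᵥ ut)⁻¹ • vecMulVec u ut)
    (hG1 : ∀ v : Fin n → ℝ, ut ⬝ᵥ v = 0 → G *ᵥ ((P * M * P - kN • 1) *ᵥ v) = v)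
    (hG3 : ∀ c : ℝ, G *ᵥ (c • u) = 0)
    (RN : EuclideanSpace ℝ (Fin n)) (hRN : RN = (B - kN • A) *ᵥ uN) :
    P *ᵥ uN = (P * G * P * A⁻¹) *ᵥ RN ∧
    (⨅ c : ℝ, ‖(uN - c • u : EuclideanSpace ℝ (Fin n))‖) ≤
      opNorm (P * G * P * A⁻¹) * ‖RN‖ :=
  stmt6_general n A B M G hA hM k kN u ut uN heig heig' hpair P hP hG1 RN hRN
end

section
/- Symmetric prefactor formula: let A ∈ ℝ^(N×N) be symmetric positive definite, M = A⁻¹ with eigenvalues k = k₁ > k₂ ≥ … ≥ k_N > 0, k simple with unit eigenvector u, P = I − u uᵀ. If k > kN > k₂ then ‖P(PMP − kN I)⁺P (M − kI) P(PMP − kN I)⁺P A⁻¹‖ = k₂(k − k₂)/(kN − k₂)². -/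
/-!
On an eigenvector of `M = A⁻¹` orthogonal to `u`, with eigenvalue `μ`, `P` acts as the identity and
`(PMP - kN)⁺` as `(μ - kN)⁻¹`, so the prefactor acts as the scalar `-f(μ)`,
`f(μ) = μ (k - μ) / (kN - μ)²`; on `u` it vanishes. In an orthonormal eigenbasis of `M` its norm is
therefore the largest `f(μ)` over the eigenvalues `0 < μ ≤ k₂`, and since `f` is increasing on
`[0, kN)` this is `f(k₂)`.
-/

open Matrix

theorem monotoneOn_mul_sub_div_sq {k kN : ℝ} (hk : kN ≤ k) :
    MonotoneOn (fun μ ↦ μ * (k - μ) / (kN - μ) ^ 2) (Set.Ico 0 kN) := by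
  rintro μ ⟨hμ, hμkN⟩ ν ⟨hν, hνkN⟩ hμν
  dsimp only
  rw [div_le_div_iff₀ (pow_pos (by linarith) 2) (pow_pos (by linarith) 2)]
  have hfactor : ν * (k - ν) * (kN - μ) ^ 2 - μ * (k - μ) * (kN - ν) ^ 2
      = (ν - μ) * (kN * (kN - μ) * (kN - ν) + (k - kN) * (kN ^ 2 - μ * ν)) := by
    ring
  have h₁ : 0 ≤ kN * (kN - μ) * (kN - ν) :=
    mul_nonneg (mul_nonneg (by linarith) (by linarith)) (by linarith)
  have h₂ : 0 ≤ (k - kN) * (kN ^ 2 - μ * ν) :=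
    mul_nonneg (by linarith) (by nlinarith)
  linarith [mul_nonneg (sub_nonneg.2 hμν) (add_nonneg h₁ h₂)]

theorem norm_neg_mul_sub_div_sq {k kN μ : ℝ} (hμ : 0 ≤ μ) (hμk : μ ≤ k) :
    ‖-(μ * (k - μ) / (kN - μ) ^ 2)‖ = μ * (k - μ) / (kN - μ) ^ 2 := by
  rw [norm_neg, Real.norm_of_nonneg (div_nonneg (mul_nonneg hμ (by linarith)) (sq_nonneg _))]

theorem EuclideanSpace.ofLp_dotProduct_self {m : Type*} [Fintype m] (u : EuclideanSpace ℝ m) :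
    u.ofLp ⬝ᵥ u.ofLp = ‖u‖ ^ 2 := by
  rw [← real_inner_self_eq_norm_sq, EuclideanSpace.inner_eq_star_dotProduct, star_trivial]

theorem ContinuousLinearMap.norm_le_opNorm_of_apply_eq_smul {𝕜 E : Type*} [RCLike 𝕜]
    [NormedAddCommGroup E] [NormedSpace 𝕜 E] (T : E →L[𝕜] E) {v : E} (hv : v ≠ 0) {c : 𝕜}
    (h : T v = c • v) : ‖c‖ ≤ ‖T‖ :=
  le_of_mul_le_mul_right (by simpa [h, norm_smul] using T.le_opNorm v) (norm_pos_iff.2 hv)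

theorem OrthonormalBasis.opNorm_le_of_forall_apply_eq_smul {ι 𝕜 E : Type*} [Fintype ι]
    [RCLike 𝕜] [NormedAddCommGroup E] [InnerProductSpace 𝕜 E] (b : OrthonormalBasis ι 𝕜 E)
    (T : E →L[𝕜] E) {C : ℝ} (hC : 0 ≤ C) (h : ∀ i, ∃ c : 𝕜, ‖c‖ ≤ C ∧ T (b i) = c • b i) :
    ‖T‖ ≤ C := by
  classical
  choose c hcC hT using h
  refine T.opNorm_le_bound hC fun x ↦ (sq_le_sq₀ (by positivity) (by positivity)).mp ?_
  have hrepr : ∀ i, b.repr (T x) i = c i * b.repr x i := fun i ↦ by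
    conv_lhs => rw [← b.sum_repr x]
    simp [hT, b.repr_self, Pi.single_apply, mul_comm]
  rw [← b.repr.norm_map, ← b.repr.norm_map x, mul_pow, EuclideanSpace.norm_sq_eq,
    EuclideanSpace.norm_sq_eq, Finset.mul_sum]
  gcongr with i
  rw [hrepr, norm_mul, mul_pow]
  gcongr
  exact hcC i

theorem Matrix.toEuclideanCLM_apply_eq_smul {m 𝕜 : Type*} [Fintype m] [DecidableEq m] [RCLike 𝕜]
    {B : Matrix m m 𝕜} {v : EuclideanSpace 𝕜 m} {c : 𝕜} (h : B *ᵥ v.ofLp = c • v.ofLp) :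
    toEuclideanCLM (𝕜 := 𝕜) B v = c • v :=
  WithLp.ofLp_injective 2 (by simpa using h)

section Prefactor

variable {m 𝕜 : Type*} [Fintype m] [Field 𝕜]

theorem dotProduct_eq_zero_of_mulVec_eq_smul {M : Matrix m m 𝕜} (hM : M.IsSymm) {u v : m → 𝕜}
    {k μ : 𝕜} (hμk : μ ≠ k) (hu : M *ᵥ u = k • u) (hv : M *ᵥ v = μ • v) : u ⬝ᵥ v = 0 := by
  have h : μ * (u ⬝ᵥ v) = k * (u ⬝ᵥ v) := by
    rw [← smul_eq_mul, ← dotProduct_smul, ← hv, dotProduct_mulVec, ← hM.eq, vecMul_transpose, hu,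
      smul_dotProduct, smul_eq_mul]
  exact (mul_eq_mul_right_iff.mp h).resolve_left hμk

variable [DecidableEq m]

theorem one_sub_vecMulVec_self_mulVec (u v : m → 𝕜) :
    (1 - vecMulVec u u) *ᵥ v = v - (u ⬝ᵥ v) • u := by
  rw [sub_mulVec, one_mulVec, vecMulVec_mulVec, op_smul_eq_smul]

/-- `P G P (M - k) P G P M`, where `G` stands for `(PMP - kN)⁺`. -/
def symmPrefactor (P G M : Matrix m m 𝕜) (k : 𝕜) : Matrix m m 𝕜 :=
  P * G * P * (M - k • 1) * P * G * P * M

theorem symmPrefactor_mulVec_eq_zero {P G M : Matrix m m 𝕜} {k : 𝕜} {w : m → 𝕜}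
    (hw : P *ᵥ (M *ᵥ w) = 0) : symmPrefactor P G M k *ᵥ w = 0 := by
  simp only [symmPrefactor, ← mulVec_mulVec, hw, mulVec_zero]

theorem symmPrefactor_mulVec_of_mulVec_eq_smul {P G M : Matrix m m 𝕜} {k kN μ : 𝕜} {v : m → 𝕜}
    (hμ : μ ≠ kN) (hG : G *ᵥ ((P * M * P - kN • 1) *ᵥ v) = v) (hPv : P *ᵥ v = v)
    (hMv : M *ᵥ v = μ • v) :
    symmPrefactor P G M k *ᵥ v = -(μ * (k - μ) / (kN - μ) ^ 2) • v := by
  have hP : ∀ c : 𝕜, P *ᵥ (c • v) = c • v := fun c ↦ by rw [mulVec_smul, hPv]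
  have hGv : G *ᵥ v = (μ - kN)⁻¹ • v := by
    have hshift : (P * M * P - kN • 1) *ᵥ v = (μ - kN) • v := by
      rw [sub_mulVec, ← mulVec_mulVec, ← mulVec_mulVec, hPv, hMv, hP, smul_mulVec, one_mulVec,
        sub_smul]
    rw [hshift, mulVec_smul] at hG
    exact (eq_inv_smul_iff₀ (sub_ne_zero.2 hμ)).2 hG
  have hG : ∀ c : 𝕜, G *ᵥ (c • v) = (c * (μ - kN)⁻¹) • v := fun c ↦ by
    rw [mulVec_smul, hGv, smul_smul]
  have hM : ∀ c : 𝕜, (M - k • 1) *ᵥ (c • v) = (c * (μ - k)) • v := fun c ↦ by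
    rw [mulVec_smul, sub_mulVec, hMv, smul_mulVec, one_mulVec, ← sub_smul, smul_smul, mul_comm]
  simp only [symmPrefactor, ← mulVec_mulVec]
  rw [hMv, hP, hG, hP, hM, hP, hG, hP]
  have : kN - μ ≠ 0 := sub_ne_zero.2 hμ.symm
  congr 1
  field_simp
  ring

end Prefactor

theorem stmt11_general (n : ℕ) (A G : Matrix (Fin n) (Fin n) ℝ) (hA : A.PosDef)
    (k k2 kN : ℝ) (u : EuclideanSpace ℝ (Fin n)) (hu : ‖u‖ = 1)
    (heig : A⁻¹ *ᵥ u = k • u)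
    (hsimple : ∀ v : EuclideanSpace ℝ (Fin n), A⁻¹ *ᵥ v = k • v → ∃ c : ℝ, v = c • u)
    (hk2 : ∃ u2 : EuclideanSpace ℝ (Fin n), u2 ≠ 0 ∧ u ⬝ᵥ u2 = 0 ∧ A⁻¹ *ᵥ u2 = k2 • u2)
    (hmax : ∀ (μ : ℝ) (v : EuclideanSpace ℝ (Fin n)), v ≠ 0 → A⁻¹ *ᵥ v = μ • v → μ = k ∨ μ ≤ k2)
    (hpos : ∀ (μ : ℝ) (v : EuclideanSpace ℝ (Fin n)), v ≠ 0 → A⁻¹ *ᵥ v = μ • v → 0 < μ)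
    (hgap1 : k > kN) (hgap2 : kN > k2)
    (P : Matrix (Fin n) (Fin n) ℝ) (hP : P = 1 - vecMulVec u u)
    (hG1 : ∀ v : Fin n → ℝ, u ⬝ᵥ v = 0 → G *ᵥ ((P * A⁻¹ * P - kN • 1) *ᵥ v) = v) :
    opNorm (P * G * P * (A⁻¹ - k • 1) * P * G * P * A⁻¹) = k2 * (k - k2) / (kN - k2) ^ 2 := by
  change ‖toEuclideanCLM (𝕜 := ℝ) (symmPrefactor P G A⁻¹ k)‖ = _
  obtain ⟨u2, hu2, hu2u, hu2eig⟩ := hk2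
  have hk2pos : 0 < k2 := hpos k2 u2 hu2 hu2eig
  have hM : (A⁻¹).IsHermitian := hA.isHermitian.inv
  have hPu : P *ᵥ u.ofLp = 0 := by
    simp [hP, one_sub_vecMulVec_self_mulVec, EuclideanSpace.ofLp_dotProduct_self, hu]
  have hact : ∀ μ (v : EuclideanSpace ℝ (Fin n)), u ⬝ᵥ v = 0 → μ ≤ k2 → A⁻¹ *ᵥ v = μ • v →
      toEuclideanCLM (𝕜 := ℝ) (symmPrefactor P G A⁻¹ k) v = -(μ * (k - μ) / (kN - μ) ^ 2) • v :=
    fun μ v huv hμ hv ↦ toEuclideanCLM_apply_eq_smul <| symmPrefactor_mulVec_of_mulVec_eq_smul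
      (by linarith) (hG1 v huv) (by simp [hP, one_sub_vecMulVec_self_mulVec, huv]) hv
  have hC : 0 ≤ k2 * (k - k2) / (kN - k2) ^ 2 := div_nonneg (by nlinarith) (sq_nonneg _)
  refine le_antisymm (hM.eigenvectorBasis.opNorm_le_of_forall_apply_eq_smul _ hC fun i ↦ ?_) ?_
  · have hv := hM.mulVec_eigenvectorBasis i
    have hne : hM.eigenvectorBasis i ≠ 0 := hM.eigenvectorBasis.orthonormal.ne_zero i
    by_cases hμk : hM.eigenvalues i = k
    · obtain ⟨c, hc⟩ := hsimple _ (hμk ▸ hv)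
      refine ⟨0, by rwa [norm_zero], toEuclideanCLM_apply_eq_smul ?_⟩
      rw [zero_smul, hc]
      exact symmPrefactor_mulVec_eq_zero (by simp [mulVec_smul, heig, hPu])
    · have hμ₀ := hpos _ _ hne hv
      have hμ₂ := (hmax _ _ hne hv).resolve_left hμk
      refine ⟨_, ?_, hact _ _ (dotProduct_eq_zero_of_mulVec_eq_smul
        (isHermitian_iff_isSymm.mp hM) hμk heig hv) hμ₂ hv⟩
      rw [norm_neg_mul_sub_div_sq hμ₀.le (by linarith)]
      exact monotoneOn_mul_sub_div_sq hgap1.le ⟨hμ₀.le, by linarith⟩ ⟨hk2pos.le, hgap2⟩ hμ₂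
  · have h := ContinuousLinearMap.norm_le_opNorm_of_apply_eq_smul _ hu2
      (hact k2 u2 hu2u le_rfl hu2eig)
    rwa [norm_neg_mul_sub_div_sq hk2pos.le (by linarith)] at h

/-- symmetric prefactor formula:
‖P(PMP − kN I)⁺P (M − kI) P(PMP − kN I)⁺P A⁻¹‖ = k₂(k − k₂)/(kN − k₂)²
for A symmetric positive definite, M = A⁻¹, k its simple largest eigenvalue,
k₂ the second largest, and k > kN > k₂. -/
theorem stmt11 (n : ℕ) (A G : Matrix (Fin n) (Fin n) ℝ) (hA : A.PosDef)
    (k k2 kN : ℝ) (u : EuclideanSpace ℝ (Fin n)) (hu : ‖u‖ = 1)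
    (heig : A⁻¹ *ᵥ u = k • u)
    (hsimple : ∀ v : EuclideanSpace ℝ (Fin n), A⁻¹ *ᵥ v = k • v → ∃ c : ℝ, v = c • u)
    (hk2 : ∃ u2 : EuclideanSpace ℝ (Fin n), u2 ≠ 0 ∧ u ⬝ᵥ u2 = 0 ∧ A⁻¹ *ᵥ u2 = k2 • u2)
    (hmax : ∀ (μ : ℝ) (v : EuclideanSpace ℝ (Fin n)), v ≠ 0 → A⁻¹ *ᵥ v = μ • v → μ = k ∨ μ ≤ k2)
    (hpos : ∀ (μ : ℝ) (v : EuclideanSpace ℝ (Fin n)), v ≠ 0 → A⁻¹ *ᵥ v = μ • v → 0 < μ)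
    (hgap1 : k > kN) (hgap2 : kN > k2) (hgap3 : k2 > 0)
    (P : Matrix (Fin n) (Fin n) ℝ) (hP : P = 1 - vecMulVec u u)
    (hG1 : ∀ v : Fin n → ℝ, u ⬝ᵥ v = 0 → G *ᵥ ((P * A⁻¹ * P - kN • 1) *ᵥ v) = v)
    (hG2 : ∀ v : Fin n → ℝ, u ⬝ᵥ v = 0 → u ⬝ᵥ (G *ᵥ v) = 0)
    (hG3 : ∀ c : ℝ, G *ᵥ (c • u) = 0) :
    opNorm (P * G * P * (A⁻¹ - k • 1) * P * G * P * A⁻¹) = k2 * (k - k2) / (kN - k2) ^ 2 :=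
  stmt11_general n A G hA k k2 kN u hu heig hsimple hk2 hmax hpos hgap1 hgap2 P hP hG1
end
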